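/- arXiv:1912.01395 — 5 statements merged into one kernel-verified Lean document; each statement's English description precedes it below -/
import Mathlib

section
/- Let j ≥ 0 and 0 ≤ k ≤ 2^j − 1 be integers, set i = 2^j + k + 1, and let v ≥ 1 be an integer. Then for every x ∈ ℝ, the integral P_{v,i}(x) = (1/(v−1)!) ∫₀ˣ (x − t)^{v−1} h_i(t) dt is given piecewise by: P_{v,i}(x) = 0 for x < η₁(i); P_{v,i}(x) = (1/v!)(x − η₁(i))^v for η₁(i) ≤ x ≤ η₂(i); P_{v,i}(x) = (1/v!)[(x − η₁(i))^v − 2(x − η₂(i))^v] for η₂(i) ≤ x ≤ η₃(i); and P_{v,i}(x) = (1/v!)[(x − η₁(i))^v − 2(x − η₂(i))^v + (x − η₃(i))^v] for x > η₃(i). -/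
/-!
The Haar function is a combination of Heaviside steps,
`h_i = 1_{[η₁,∞)} - 2·1_{[η₂,∞)} + 1_{[η₃,∞)}`, and for `a ≥ 0` the Riemann–Liouville integral
of a step is a truncated power: `∫₀ˣ (x - t)^{v-1} 1_{[a,∞)}(t) dt = (x - a)₊^v / v`. Hence
`P_{v,i}(x) = (1/v!)[(x - η₁)₊^v - 2(x - η₂)₊^v + (x - η₃)₊^v]`, and each of the four cases
just records which of the truncated powers vanish.
-/

open MeasureTheory Real

/-- Left endpoint of the support of the Haar wavelet indexed by `(j, k)`. -/
noncomputable def eta1 (j k : ℕ) : ℝ := (k : ℝ) / 2 ^ j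

/-- Midpoint of the support of the Haar wavelet indexed by `(j, k)`. -/
noncomputable def eta2 (j k : ℕ) : ℝ := (2 * (k : ℝ) + 1) / 2 ^ (j + 1)

/-- Right endpoint of the support of the Haar wavelet indexed by `(j, k)`. -/
noncomputable def eta3 (j k : ℕ) : ℝ := ((k : ℝ) + 1) / 2 ^ j

/-- The Haar wavelet `h_i` with `i = 2^j + k + 1`: equals `1` on `[η₁, η₂)`,
`-1` on `[η₂, η₃)` and `0` elsewhere. -/
noncomputable def haarJK (j k : ℕ) (t : ℝ) : ℝ :=
  if eta1 j k ≤ t ∧ t < eta2 j k then 1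
  else if eta2 j k ≤ t ∧ t < eta3 j k then -1
  else 0

/-- `p_{2,i}(t) = ∫₀ᵗ (t - s) h_i(s) ds` where `i = 2^j + k + 1`. -/
noncomputable def p2JK (j k : ℕ) (t : ℝ) : ℝ := ∫ s in (0:ℝ)..t, (t - s) * haarJK j k s

/-- `P_{v,i}(x) = (1/(v-1)!) ∫₀ˣ (x-t)^{v-1} h_i(t) dt` where `i = 2^j + k + 1`. -/
noncomputable def PvJK (v j k : ℕ) (x : ℝ) : ℝ :=
  ((Nat.factorial (v - 1) : ℝ))⁻¹ * ∫ t in (0:ℝ)..x, (x - t) ^ (v - 1) * haarJK j k t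

open Set intervalIntegral

lemma monotone_indicator_Ici_one (a : ℝ) : Monotone ((Ici a).indicator (1 : ℝ → ℝ)) := by
  intro s t hst
  by_cases hs : a ≤ s
  · simp [indicator_of_mem (mem_Ici.2 hs), indicator_of_mem (mem_Ici.2 (hs.trans hst))]
  · simp only [indicator_of_notMem (mem_Ici.not.2 hs)]
    exact indicator_nonneg (fun _ _ => zero_le_one) t

lemma intervalIntegrable_mul_indicator_Ici {f : ℝ → ℝ} (hf : Continuous f) (a b c : ℝ) :
    IntervalIntegrable (fun t => f t * (Ici a).indicator 1 t) volume b c :=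
  (monotone_indicator_Ici_one a).intervalIntegrable.continuousOn_mul hf.continuousOn

lemma integral_sub_pow (x a b : ℝ) (n : ℕ) :
    ∫ t in a..b, (x - t) ^ n = ((x - a) ^ (n + 1) - (x - b) ^ (n + 1)) / (n + 1) := by
  rw [integral_comp_sub_left (fun t => t ^ n) x, integral_pow]

lemma integral_sub_pow_mul_indicator_Ici {a : ℝ} (ha : 0 ≤ a) (x : ℝ) (n : ℕ) :
    ∫ t in (0 : ℝ)..x, (x - t) ^ n * (Ici a).indicator 1 t
      = max (x - a) 0 ^ (n + 1) / (n + 1) := by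
  have hint := intervalIntegrable_mul_indicator_Ici (f := fun t => (x - t) ^ n) (by fun_prop) a
  have hvanish : ∀ b ≤ a, ∫ t in (0 : ℝ)..b, (x - t) ^ n * (Ici a).indicator 1 t = 0 := by
    intro b hb
    apply integral_zero_ae
    filter_upwards [measure_eq_zero_iff_ae_notMem.1 (measure_singleton a)] with t hta ht
    have hlt : t < a := lt_of_le_of_ne ((uIoc_subset_uIcc ht).2.trans (max_le ha hb)) hta
    simp [indicator_of_notMem (notMem_Ici.2 hlt)]
  rcases le_total x a with hxa | hax
  · rw [hvanish x hxa, max_eq_right (sub_nonpos.2 hxa), zero_pow n.succ_ne_zero, zero_div]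
  · have hone : EqOn (fun t => (x - t) ^ n * (Ici a).indicator 1 t) (fun t => (x - t) ^ n)
        (uIcc a x) := fun t ht => by
      rw [uIcc_of_le hax] at ht
      simp [indicator_of_mem (mem_Ici.2 ht.1)]
    rw [← integral_add_adjacent_intervals (hint 0 a) (hint a x), hvanish a le_rfl, zero_add,
      integral_congr hone, integral_sub_pow, sub_self, zero_pow n.succ_ne_zero, sub_zero,
      max_eq_left (sub_nonneg.2 hax)]

lemma eta1_nonneg (j k : ℕ) : 0 ≤ eta1 j k := by unfold eta1; positivity

lemma eta1_lt_eta2 (j k : ℕ) : eta1 j k < eta2 j k := by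
  rw [eta1, eta2, pow_succ, div_lt_div_iff₀ (by positivity) (by positivity)]
  nlinarith [pow_pos (two_pos : (0 : ℝ) < 2) j]

lemma eta2_lt_eta3 (j k : ℕ) : eta2 j k < eta3 j k := by
  rw [eta2, eta3, pow_succ, div_lt_div_iff₀ (by positivity) (by positivity)]
  nlinarith [pow_pos (two_pos : (0 : ℝ) < 2) j]

lemma haarJK_eq_indicator_Ici (j k : ℕ) (t : ℝ) :
    haarJK j k t = (Ici (eta1 j k)).indicator 1 t - 2 * (Ici (eta2 j k)).indicator 1 t
      + (Ici (eta3 j k)).indicator 1 t := by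
  have h12 := eta1_lt_eta2 j k
  have h23 := eta2_lt_eta3 j k
  simp only [haarJK, indicator_apply, mem_Ici, Pi.one_apply]
  split_ifs <;> grind

lemma integral_sub_pow_mul_haarJK (j k n : ℕ) (x : ℝ) :
    ∫ t in (0 : ℝ)..x, (x - t) ^ n * haarJK j k t
      = (max (x - eta1 j k) 0 ^ (n + 1) - 2 * max (x - eta2 j k) 0 ^ (n + 1)
          + max (x - eta3 j k) 0 ^ (n + 1)) / (n + 1) := by
  have h1 := eta1_nonneg j k
  have h2 := h1.trans (eta1_lt_eta2 j k).le
  have h3 := h2.trans (eta2_lt_eta3 j k).le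
  have hint := intervalIntegrable_mul_indicator_Ici (f := fun t => (x - t) ^ n) (by fun_prop)
  simp_rw [haarJK_eq_indicator_Ici, mul_add, mul_sub, mul_left_comm _ (2 : ℝ)]
  rw [integral_add ((hint _ 0 x).sub ((hint _ 0 x).const_mul 2)) (hint _ 0 x),
    integral_sub (hint _ 0 x) ((hint _ 0 x).const_mul 2), intervalIntegral.integral_const_mul,
    integral_sub_pow_mul_indicator_Ici h1, integral_sub_pow_mul_indicator_Ici h2,
    integral_sub_pow_mul_indicator_Ici h3]
  ring

lemma PvJK_eq_sum_truncated_pow {v : ℕ} (hv : 1 ≤ v) (j k : ℕ) (x : ℝ) :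
    PvJK v j k x = ((Nat.factorial v : ℝ))⁻¹ * (max (x - eta1 j k) 0 ^ v
      - 2 * max (x - eta2 j k) 0 ^ v + max (x - eta3 j k) 0 ^ v) := by
  obtain ⟨n, rfl⟩ : ∃ n, v = n + 1 := ⟨v - 1, by omega⟩
  rw [PvJK, Nat.add_sub_cancel, integral_sub_pow_mul_haarJK, Nat.factorial_succ]
  push_cast
  field_simp

theorem Pv_piecewise_general (j k v : ℕ) (hv : 1 ≤ v) (x : ℝ) :
    (x < eta1 j k → PvJK v j k x = 0) ∧
    (eta1 j k ≤ x → x ≤ eta2 j k →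
      PvJK v j k x = ((Nat.factorial v : ℝ))⁻¹ * (x - eta1 j k) ^ v) ∧
    (eta2 j k ≤ x → x ≤ eta3 j k →
      PvJK v j k x = ((Nat.factorial v : ℝ))⁻¹ *
        ((x - eta1 j k) ^ v - 2 * (x - eta2 j k) ^ v)) ∧
    (eta3 j k < x →
      PvJK v j k x = ((Nat.factorial v : ℝ))⁻¹ *
        ((x - eta1 j k) ^ v - 2 * (x - eta2 j k) ^ v + (x - eta3 j k) ^ v)) := by
  have h12 := eta1_lt_eta2 j k
  have h23 := eta2_lt_eta3 j k
  have hv0 : v ≠ 0 := by omega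
  simp only [PvJK_eq_sum_truncated_pow hv]
  refine ⟨fun h1 => ?_, fun h1 h2 => ?_, fun h2 h3 => ?_, fun h3 => ?_⟩
  · rw [max_eq_right (by linarith), max_eq_right (by linarith), max_eq_right (by linarith),
      zero_pow hv0]
    ring
  · rw [max_eq_left (by linarith), max_eq_right (by linarith), max_eq_right (by linarith),
      zero_pow hv0]
    ring
  · rw [max_eq_left (by linarith), max_eq_left (by linarith), max_eq_right (by linarith),
      zero_pow hv0]
    ring
  · rw [max_eq_left (by linarith), max_eq_left (by linarith), max_eq_left (by linarith)]

/-- the piecewise closed form of `P_{v,i}`. -/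
theorem Pv_piecewise (j k v : ℕ) (hk : k ≤ 2 ^ j - 1) (hv : 1 ≤ v) (x : ℝ) :
    (x < eta1 j k → PvJK v j k x = 0) ∧
    (eta1 j k ≤ x → x ≤ eta2 j k →
      PvJK v j k x = ((Nat.factorial v : ℝ))⁻¹ * (x - eta1 j k) ^ v) ∧
    (eta2 j k ≤ x → x ≤ eta3 j k →
      PvJK v j k x = ((Nat.factorial v : ℝ))⁻¹ *
        ((x - eta1 j k) ^ v - 2 * (x - eta2 j k) ^ v)) ∧
    (eta3 j k < x →
      PvJK v j k x = ((Nat.factorial v : ℝ))⁻¹ *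
        ((x - eta1 j k) ^ v - 2 * (x - eta2 j k) ^ v + (x - eta3 j k) ^ v)) :=
  Pv_piecewise_general j k v hv x
end

section
/- Let j ≥ 0 and 0 ≤ k ≤ 2^j − 1 be integers and set i = 2^j + k + 1. Then for every t ∈ [0,1], 0 ≤ p_{2,i}(t) ≤ (2^{−(j+1)})². -/
open MeasureTheory Real

/-!
Writing `h = 𝟙[η₁,∞) - 2 • 𝟙[η₂,∞) + 𝟙[η₃,∞)` and using
`∫₀ᵗ (t - s) 𝟙[a,∞)(s) ds = (t - a)₊² / 2` for `a ≥ 0`, the function `p_{2,i}` is the second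
difference, with step `D = 2^{-(j+1)}`, of `x ↦ x₊² / 2` evaluated at `t - η₁`. That second
difference rises from `0` (for `t ≤ η₁`) to `D²` (for `t ≥ η₃`).
-/

open Set intervalIntegral

lemma intervalIntegrable_sub_mul_indicator (t x y : ℝ) {S : Set ℝ} (hS : MeasurableSet S) :
    IntervalIntegrable (fun s => (t - s) * S.indicator 1 s) volume x y := by
  refine IntervalIntegrable.continuousOn_mul ?_ (by fun_prop)
  rw [intervalIntegrable_iff]
  exact (integrableOn_const measure_Ioc_lt_top.ne).indicator hS

lemma integral_sub_mul_indicator_Ici {a : ℝ} (ha : 0 ≤ a) (t : ℝ) :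
    ∫ s in 0..t, (t - s) * (Ici a).indicator 1 s = max (t - a) 0 ^ 2 / 2 := by
  -- with `Ioi a` the integrand vanishes at every point of `(0, a]`, not only almost everywhere
  have hIoi : (Ici a).indicator (1 : ℝ → ℝ) =ᵐ[volume] (Ioi a).indicator 1 :=
    indicator_ae_eq_of_ae_eq_set Ioi_ae_eq_Ici.symm
  rw [integral_congr_ae (hIoi.mono fun s hs _ => by rw [hs])]
  rcases le_total t a with hta | hat
  · have hzero : EqOn (fun s => (t - s) * (Ioi a).indicator 1 s) 0 (uIcc 0 t) := by
      intro s hs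
      simp [hs.2.trans (max_le ha hta)]
    simp [integral_congr hzero, max_eq_right (sub_nonpos.2 hta)]
  · have hleft : ∀ s ∈ uIoc 0 a, (t - s) * (Ioi a).indicator 1 s = 0 := by
      intro s hs
      simp [(uIoc_of_le ha ▸ hs).2]
    have hright : ∀ s ∈ uIoc a t, (t - s) * (Ioi a).indicator 1 s = t - s := by
      intro s hs
      simp [(uIoc_of_le hat ▸ hs).1]
    rw [← integral_add_adjacent_intervals
        (intervalIntegrable_sub_mul_indicator t 0 a measurableSet_Ioi)
        (intervalIntegrable_sub_mul_indicator t a t measurableSet_Ioi),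
      integral_congr_ae (ae_of_all _ hleft), integral_congr_ae (ae_of_all _ hright),
      integral_comp_sub_left (fun x => x), max_eq_left (sub_nonneg.2 hat)]
    simp

lemma eta2_eq_eta1_add (j k : ℕ) : eta2 j k = eta1 j k + 1 / 2 ^ (j + 1) := by
  unfold eta1 eta2; rw [pow_succ]; field_simp

lemma eta3_eq_eta1_add (j k : ℕ) : eta3 j k = eta1 j k + 2 * (1 / 2 ^ (j + 1)) := by
  unfold eta1 eta3; rw [pow_succ]; field_simp

lemma haarJK_eq_indicator (j k : ℕ) (s : ℝ) :
    haarJK j k s = (Ici (eta1 j k)).indicator 1 s - 2 * (Ici (eta2 j k)).indicator 1 s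
      + (Ici (eta3 j k)).indicator 1 s := by
  have hD : (0 : ℝ) < 1 / 2 ^ (j + 1) := by positivity
  have h2 := eta2_eq_eta1_add j k
  have h3 := eta3_eq_eta1_add j k
  unfold haarJK
  simp only [indicator_apply, mem_Ici, Pi.one_apply]
  split_ifs <;> grind

lemma p2JK_eq (j k : ℕ) (t : ℝ) :
    p2JK j k t = max (t - eta1 j k) 0 ^ 2 / 2 - 2 * (max (t - eta2 j k) 0 ^ 2 / 2)
      + max (t - eta3 j k) 0 ^ 2 / 2 := by
  have hD : (0 : ℝ) < 1 / 2 ^ (j + 1) := by positivity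
  have h1 := eta1_nonneg j k
  have h2 := eta2_eq_eta1_add j k
  have h3 := eta3_eq_eta1_add j k
  have hii := fun a => intervalIntegrable_sub_mul_indicator t 0 t (measurableSet_Ici (a := a))
  unfold p2JK
  simp_rw [haarJK_eq_indicator, mul_add, mul_sub, mul_left_comm _ (2 : ℝ)]
  rw [integral_add ((hii _).sub ((hii _).const_mul 2)) (hii _),
    integral_sub (hii _) ((hii _).const_mul 2), intervalIntegral.integral_const_mul,
    integral_sub_mul_indicator_Ici h1, integral_sub_mul_indicator_Ici (by linarith),
    integral_sub_mul_indicator_Ici (by linarith)]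

lemma second_difference_sq_max_bounds {a D : ℝ} (hD : 0 ≤ D) (t : ℝ) :
    0 ≤ max (t - a) 0 ^ 2 / 2 - 2 * (max (t - (a + D)) 0 ^ 2 / 2)
        + max (t - (a + 2 * D)) 0 ^ 2 / 2 ∧
      max (t - a) 0 ^ 2 / 2 - 2 * (max (t - (a + D)) 0 ^ 2 / 2) + max (t - (a + 2 * D)) 0 ^ 2 / 2
        ≤ D ^ 2 := by
  rcases le_total t a with h1 | h1 <;> rcases le_total t (a + D) with h2 | h2 <;>
    rcases le_total t (a + 2 * D) with h3 | h3 <;>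
    simp only [max_eq_left, max_eq_right, sub_nonneg, sub_nonpos, *] <;>
    constructor <;> nlinarith

theorem p2_bounds_general (j k : ℕ) :
    ∀ t ∈ Set.Icc (0:ℝ) 1,
      0 ≤ p2JK j k t ∧ p2JK j k t ≤ (1 / 2 ^ (j + 1)) ^ 2 := by
  intro t _
  rw [p2JK_eq, eta2_eq_eta1_add, eta3_eq_eta1_add]
  exact second_difference_sq_max_bounds (by positivity) t

/-- `0 ≤ p_{2,i}(t) ≤ (2^{-(j+1)})²` on `[0,1]`. -/
theorem p2_bounds (j k : ℕ) (hk : k ≤ 2 ^ j - 1) :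
    ∀ t ∈ Set.Icc (0:ℝ) 1,
      0 ≤ p2JK j k t ∧ p2JK j k t ≤ (1 / 2 ^ (j + 1)) ^ 2 :=
  p2_bounds_general j k
end

section
/- Let y : [0,1] → ℝ be three times differentiable with |y'''(t)| ≤ ξ₁ for all t ∈ [0,1], and define the Haar coefficients a_{2^j+k+1} = 2^j ∫₀¹ y''(t) h_{2^j+k+1}(t) dt for integers j ≥ 0 and 0 ≤ k ≤ 2^j − 1. Then for every integer J ≥ 0, the truncation error function Ẽ_{M1}(t) = Σ_{j=J+1}^∞ Σ_{k=0}^{2^j−1} a_{2^j+k+1} (p_{2,2^j+k+1}(t) − p_{2,2^j+k+1}(1)) satisfies the L²([0,1]) bound ‖Ẽ_{M1}‖₂ ≤ (ξ₁/3)·(2^{−(J+1)})². -/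
open MeasureTheory Real

/-- The Haar coefficient `2^j ∫₀¹ f(t) h_{2^j+k+1}(t) dt` of a function `f`. -/
noncomputable def haarCoeff (f : ℝ → ℝ) (j k : ℕ) : ℝ :=
  2 ^ j * ∫ t in (0:ℝ)..1, f t * haarJK j k t

/-- Truncation error of the Haar expansion at resolution `J`:
`Σ_{j=J+1}^∞ Σ_{k=0}^{2^j-1} c_{j,k} p_{2,2^j+k+1}(t)` (here the outer sum is
reindexed by `j = J + 1 + m`). -/
noncomputable def truncErr (c : ℕ → ℕ → ℝ) (J : ℕ) (t : ℝ) : ℝ :=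
  ∑' m : ℕ, ∑ k ∈ Finset.range (2 ^ (J + 1 + m)), c (J + 1 + m) k * p2JK (J + 1 + m) k t

/-- The `L²([0,1])` norm of a function. -/
noncomputable def L2norm (f : ℝ → ℝ) : ℝ := Real.sqrt (∫ t in (0:ℝ)..1, f t ^ 2)

/-- Truncation error of the Haar expansion in the BVP case, at resolution `J`:
`Σ_{j=J+1}^∞ Σ_{k=0}^{2^j-1} c_{j,k} (p_{2,2^j+k+1}(t) - p_{2,2^j+k+1}(1))`
(the outer sum is reindexed by `j = J + 1 + m`). -/
noncomputable def truncErrBVP (c : ℕ → ℕ → ℝ) (J : ℕ) (t : ℝ) : ℝ :=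
  ∑' m : ℕ, ∑ k ∈ Finset.range (2 ^ (J + 1 + m)),
    c (J + 1 + m) k * (p2JK (J + 1 + m) k t - p2JK (J + 1 + m) k 1)

/-!
Since `η₂ - η₁ = η₃ - η₂ = d := 2^{-(j+1)}`, the Haar function is the second difference
`h = 1_{[η₁,∞)} - 2·1_{[η₂,∞)} + 1_{[η₃,∞)}`. Hence for `t ≥ 0`
`p_{2,i}(t) = ((t-η₁)₊² - 2(t-η₂)₊² + (t-η₃)₊²)/2 ∈ [0, d²]`, while
`a_i = -2^j (y'(η₁) - 2y'(η₂) + y'(η₃))`, which the mean value inequality applied twice bounds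
by `2^j ξ₁ d²`. The `2^j` terms of level `j` thus contribute at most `ξ₁ 4^{-j}/16` uniformly
on `[0,1]`, and summing over `j > J` bounds `|Ẽ|`, hence `‖Ẽ‖₂`, by `ξ₁ 4^{-(J+1)}/12`.
-/

open Set

lemma intervalIntegral_indicator_Ici {f : ℝ → ℝ} {a t : ℝ} (ha : 0 ≤ a) (ht : 0 ≤ t) :
    ∫ s in (0:ℝ)..t, (Ici a).indicator f s = ∫ s in Ioc a t, f s := by
  rw [intervalIntegral.integral_of_le ht, setIntegral_indicator measurableSet_Ici,
    setIntegral_congr_set ((ae_eq_refl _).inter Ioi_ae_eq_Ici.symm), Ioc_inter_Ioi,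
    max_eq_right ha]

lemma integral_Ioc_sub_self (a t : ℝ) : ∫ s in Ioc a t, (t - s) = max (t - a) 0 ^ 2 / 2 := by
  rcases le_total a t with h | h
  · rw [← intervalIntegral.integral_of_le h, max_eq_left (sub_nonneg.2 h),
      intervalIntegral.integral_comp_sub_left (fun x => x), integral_id]
    ring
  · rw [Ioc_eq_empty (not_lt.2 h), max_eq_right (sub_nonpos.2 h)]
    simp

lemma sq_max_secondDiff_mem_Icc {d : ℝ} (hd : 0 ≤ d) (x : ℝ) :
    max x 0 ^ 2 - 2 * max (x - d) 0 ^ 2 + max (x - 2 * d) 0 ^ 2 ∈ Icc 0 (2 * d ^ 2) := by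
  rcases le_total x 0 with h0 | h0
  · rw [max_eq_right h0, max_eq_right (by linarith), max_eq_right (by linarith)]
    constructor <;> nlinarith
  rw [max_eq_left h0]
  rcases le_total x d with h1 | h1
  · rw [max_eq_right (by linarith), max_eq_right (by linarith)]
    constructor <;> nlinarith
  rw [max_eq_left (by linarith)]
  rcases le_total x (2 * d) with h2 | h2
  · rw [max_eq_right (by linarith)]
    constructor <;> nlinarith
  · rw [max_eq_left (by linarith)]
    constructor <;> nlinarith

lemma abs_secondDiff_le {g : ℝ → ℝ} {a d M : ℝ} (hd : 0 ≤ d) (hg : Differentiable ℝ g)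
    (hg' : Differentiable ℝ (deriv g)) (hM : ∀ x ∈ Icc a (a + 2 * d), |deriv (deriv g) x| ≤ M) :
    |g a - 2 * g (a + d) + g (a + 2 * d)| ≤ M * d ^ 2 := by
  have inner : ∀ x ∈ Icc a (a + d), ‖deriv g (x + d) - deriv g x‖ ≤ M * d := by
    intro x hx
    have := norm_image_sub_le_of_norm_deriv_le_segment' (f' := deriv (deriv g))
      (fun z _ => (hg' z).hasDerivAt.hasDerivWithinAt)
      (fun z hz => hM z ⟨by linarith [hx.1, hz.1], by linarith [hx.2, hz.2]⟩)
      (x + d) ⟨by linarith, le_rfl⟩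
    simpa using this
  have outer := norm_image_sub_le_of_norm_deriv_le_segment'
    (f := fun x => g (x + d) - g x) (f' := fun x => deriv g (x + d) - deriv g x)
    (fun z _ => (((hg (z + d)).hasDerivAt.comp_add_const z d).sub (hg z).hasDerivAt).hasDerivWithinAt)
    (fun z hz => inner z (Ico_subset_Icc_self hz)) (a + d) ⟨by linarith, le_rfl⟩
  calc |g a - 2 * g (a + d) + g (a + 2 * d)|
      = ‖(g (a + d + d) - g (a + d)) - (g (a + d) - g a)‖ := by
        rw [Real.norm_eq_abs, add_assoc, ← two_mul]
        ring_nf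
    _ ≤ M * d * (a + d - a) := outer
    _ = M * d ^ 2 := by ring

namespace Haar

section

variable (j k : ℕ)

lemma eta2_eq : eta2 j k = eta1 j k + (2 ^ (j + 1))⁻¹ := by
  simp only [eta1, eta2, pow_succ]
  field_simp

lemma eta3_eq : eta3 j k = eta1 j k + 2 * (2 ^ (j + 1))⁻¹ := by
  simp only [eta1, eta3, pow_succ]
  field_simp

lemma eta1_nonneg : 0 ≤ eta1 j k := by
  unfold eta1
  positivity

lemma eta1_le_eta2 : eta1 j k ≤ eta2 j k := by
  rw [eta2_eq, le_add_iff_nonneg_right]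
  positivity

lemma eta2_le_eta3 : eta2 j k ≤ eta3 j k := by
  rw [eta2_eq, eta3_eq, two_mul, ← add_assoc, le_add_iff_nonneg_right]
  positivity

lemma mul_haarJK (f : ℝ → ℝ) (s : ℝ) :
    f s * haarJK j k s = (Ici (eta1 j k)).indicator f s - 2 * (Ici (eta2 j k)).indicator f s
      + (Ici (eta3 j k)).indicator f s := by
  have h12 := eta1_le_eta2 j k
  have h23 := eta2_le_eta3 j k
  simp only [haarJK, indicator, mem_Ici]
  split_ifs <;> grind

lemma integral_mul_haarJK {f : ℝ → ℝ} {t : ℝ} (ht : 0 ≤ t)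
    (hf : IntervalIntegrable f volume 0 t) :
    ∫ s in (0:ℝ)..t, f s * haarJK j k s = (∫ s in Ioc (eta1 j k) t, f s)
      - 2 * (∫ s in Ioc (eta2 j k) t, f s) + ∫ s in Ioc (eta3 j k) t, f s := by
  have hi : ∀ a, IntervalIntegrable ((Ici a).indicator f) volume 0 t :=
    fun a => ⟨hf.1.indicator measurableSet_Ici, hf.2.indicator measurableSet_Ici⟩
  have h1 := eta1_nonneg j k
  have h2 := h1.trans (eta1_le_eta2 j k)
  simp_rw [mul_haarJK]
  rw [intervalIntegral.integral_add ((hi _).sub ((hi _).const_mul 2)) (hi _),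
    intervalIntegral.integral_sub (hi _) ((hi _).const_mul 2), intervalIntegral.integral_const_mul,
    intervalIntegral_indicator_Ici h1 ht, intervalIntegral_indicator_Ici h2 ht,
    intervalIntegral_indicator_Ici (h2.trans (eta2_le_eta3 j k)) ht]

lemma p2JK_eq {t : ℝ} (ht : 0 ≤ t) :
    p2JK j k t = (max (t - eta1 j k) 0 ^ 2 - 2 * max (t - eta2 j k) 0 ^ 2
      + max (t - eta3 j k) 0 ^ 2) / 2 := by
  rw [p2JK, integral_mul_haarJK (f := fun s => t - s) j k ht
      ((continuous_const.sub continuous_id).intervalIntegrable 0 t),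
    integral_Ioc_sub_self, integral_Ioc_sub_self, integral_Ioc_sub_self]
  ring

end

variable {j k : ℕ}

lemma eta3_le_one (hk : k < 2 ^ j) : eta3 j k ≤ 1 := by
  rw [eta3, div_le_one (by positivity)]
  exact_mod_cast hk

lemma p2JK_mem_Icc {t : ℝ} (ht : 0 ≤ t) : p2JK j k t ∈ Icc 0 (((2 : ℝ) ^ (j + 1))⁻¹ ^ 2) := by
  have h := sq_max_secondDiff_mem_Icc (d := ((2 : ℝ) ^ (j + 1))⁻¹) (by positivity) (t - eta1 j k)
  rw [p2JK_eq j k ht, eta2_eq, eta3_eq, ← sub_sub, ← sub_sub]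
  constructor <;> linarith [h.1, h.2]

lemma abs_p2JK_sub_p2JK_one_le {t : ℝ} (ht : 0 ≤ t) :
    |p2JK j k t - p2JK j k 1| ≤ ((2 : ℝ) ^ (j + 1))⁻¹ ^ 2 :=
  abs_sub_le_of_nonneg_of_le (p2JK_mem_Icc ht).1 (p2JK_mem_Icc ht).2
    (p2JK_mem_Icc zero_le_one).1 (p2JK_mem_Icc zero_le_one).2

lemma integral_deriv_mul_haarJK {g : ℝ → ℝ} (hg : Differentiable ℝ g)
    (hg' : Continuous (deriv g)) (hk : k < 2 ^ j) :
    ∫ t in (0:ℝ)..1, deriv g t * haarJK j k t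
      = -(g (eta1 j k) - 2 * g (eta2 j k) + g (eta3 j k)) := by
  have ftc : ∀ a ≤ 1, ∫ s in Ioc a 1, deriv g s = g 1 - g a := fun a ha => by
    rw [← intervalIntegral.integral_of_le ha,
      intervalIntegral.integral_deriv_eq_sub (fun x _ => hg x) (hg'.intervalIntegrable a 1)]
  have h3 := eta3_le_one hk
  have h2 := (eta2_le_eta3 j k).trans h3
  rw [integral_mul_haarJK j k zero_le_one (hg'.intervalIntegrable 0 1), ftc _ h3, ftc _ h2,
    ftc _ ((eta1_le_eta2 j k).trans h2)]
  ring

lemma abs_haarCoeff_deriv_le {g : ℝ → ℝ} {M : ℝ} (hg : Differentiable ℝ g)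
    (hg' : Differentiable ℝ (deriv g)) (hM : ∀ t ∈ Icc (0:ℝ) 1, |deriv (deriv g) t| ≤ M)
    (hk : k < 2 ^ j) :
    |haarCoeff (deriv g) j k| ≤ 2 ^ j * (M * ((2 : ℝ) ^ (j + 1))⁻¹ ^ 2) := by
  rw [haarCoeff, integral_deriv_mul_haarJK hg hg'.continuous hk, abs_mul, abs_neg,
    abs_of_pos (by positivity)]
  gcongr
  rw [eta2_eq, eta3_eq]
  refine abs_secondDiff_le (by positivity) hg hg' fun x hx => hM x ⟨?_, ?_⟩
  · linarith [eta1_nonneg j k, hx.1]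
  · linarith [eta3_eq j k, eta3_le_one hk, hx.2]

lemma abs_sum_mul_p2JK_sub_le {c : ℕ → ℕ → ℝ} {M : ℝ}
    (hc : ∀ k < 2 ^ j, |c j k| ≤ 2 ^ j * (M * ((2 : ℝ) ^ (j + 1))⁻¹ ^ 2)) {t : ℝ} (ht : 0 ≤ t) :
    |∑ k ∈ Finset.range (2 ^ j), c j k * (p2JK j k t - p2JK j k 1)| ≤ M / 16 * (1 / 4) ^ j := by
  calc |∑ k ∈ Finset.range (2 ^ j), c j k * (p2JK j k t - p2JK j k 1)|
      ≤ ∑ k ∈ Finset.range (2 ^ j), |c j k| * |p2JK j k t - p2JK j k 1| :=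
        (Finset.abs_sum_le_sum_abs _ _).trans_eq (Finset.sum_congr rfl fun _ _ => abs_mul _ _)
    _ ≤ ∑ _k ∈ Finset.range (2 ^ j),
          2 ^ j * (M * ((2 : ℝ) ^ (j + 1))⁻¹ ^ 2) * ((2 : ℝ) ^ (j + 1))⁻¹ ^ 2 := by
        refine Finset.sum_le_sum fun k hk => ?_
        have hck := hc k (Finset.mem_range.1 hk)
        exact mul_le_mul hck (abs_p2JK_sub_p2JK_one_le ht) (abs_nonneg _)
          ((abs_nonneg _).trans hck)
    _ = M / 16 * (1 / 4) ^ j := by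
        rw [Finset.sum_const, Finset.card_range, nsmul_eq_mul, one_div_pow,
          show (4 : ℝ) ^ j = 2 ^ j * 2 ^ j by rw [← mul_pow]; norm_num]
        push_cast
        field_simp
        ring

end Haar

lemma abs_truncErrBVP_le {c : ℕ → ℕ → ℝ} {B t : ℝ}
    (hc : ∀ j, |∑ k ∈ Finset.range (2 ^ j), c j k * (p2JK j k t - p2JK j k 1)| ≤ B * (1 / 4) ^ j)
    (J : ℕ) : |truncErrBVP c J t| ≤ 4 / 3 * B * (1 / 4) ^ (J + 1) := by
  have hsum : HasSum (fun m : ℕ => B * (1 / 4) ^ (J + 1 + m)) (4 / 3 * B * (1 / 4) ^ (J + 1)) := by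
    have e : (fun m : ℕ => B * (1 / 4 : ℝ) ^ (J + 1 + m))
        = fun m => B * (1 / 4) ^ (J + 1) * (1 / 4) ^ m := funext fun m => by rw [pow_add, mul_assoc]
    rw [e, show 4 / 3 * B * (1 / 4 : ℝ) ^ (J + 1) = B * (1 / 4) ^ (J + 1) * (1 - 1 / 4)⁻¹ by ring]
    exact (hasSum_geometric_of_lt_one (by norm_num) (by norm_num)).mul_left _
  rw [← Real.norm_eq_abs]
  exact tsum_of_norm_bounded hsum fun m => (Real.norm_eq_abs _).trans_le (hc (J + 1 + m))

lemma L2norm_le_of_abs_le {f : ℝ → ℝ} {M : ℝ} (hf : ∀ t ∈ Ioc (0:ℝ) 1, |f t| ≤ M) :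
    L2norm f ≤ M := by
  have hM : 0 ≤ M := (abs_nonneg _).trans (hf 1 ⟨zero_lt_one, le_rfl⟩)
  have hsq : ∫ t in (0:ℝ)..1, f t ^ 2 ≤ M ^ 2 := by
    have := intervalIntegral.norm_integral_le_of_norm_le_const (a := 0) (b := 1) (C := M ^ 2)
      (f := fun t => f t ^ 2) fun t ht => by
        rw [uIoc_of_le zero_le_one] at ht
        simpa [sq_abs] using pow_le_pow_left₀ (abs_nonneg _) (hf t ht) 2
    simpa using (le_abs_self _).trans this
  rw [L2norm, ← sqrt_sq hM]
  exact sqrt_le_sqrt hsq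

theorem truncation_error_bound_bvp_general (y : ℝ → ℝ) (ξ₁ : ℝ)
    (hy' : Differentiable ℝ (deriv y))
    (hy'' : Differentiable ℝ (deriv (deriv y)))
    (hb : ∀ t ∈ Set.Icc (0:ℝ) 1, |deriv (deriv (deriv y)) t| ≤ ξ₁)
    (J : ℕ) :
    L2norm (truncErrBVP (haarCoeff (deriv (deriv y))) J) ≤
      ξ₁ / 3 * (1 / 2 ^ (J + 1)) ^ 2 := by
  have hξ : 0 ≤ ξ₁ := (abs_nonneg _).trans (hb 0 ⟨le_rfl, zero_le_one⟩)
  have hsup : ∀ t ∈ Ioc (0:ℝ) 1,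
      |truncErrBVP (haarCoeff (deriv (deriv y))) J t| ≤ 4 / 3 * (ξ₁ / 16) * (1 / 4) ^ (J + 1) :=
    fun t ht => abs_truncErrBVP_le (fun _ => Haar.abs_sum_mul_p2JK_sub_le
      (fun _ hk => Haar.abs_haarCoeff_deriv_le hy' hy'' hb hk) ht.1.le) J
  have h4 : (1 / 2 ^ (J + 1) : ℝ) ^ 2 = (1 / 4) ^ (J + 1) := by
    rw [← one_div_pow, ← pow_mul, mul_comm, pow_mul]
    norm_num
  refine (L2norm_le_of_abs_le hsup).trans ?_
  rw [h4]
  have : (0 : ℝ) ≤ (1 / 4) ^ (J + 1) := by positivity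
  nlinarith

/-- the `L²` bound `‖Ẽ_{M1}‖₂ ≤ (ξ₁/3)·(2^{-(J+1)})²` on the BVP
truncation error of the Haar expansion of `y''`, for `|y'''| ≤ ξ₁`. -/
theorem truncation_error_bound_bvp (y : ℝ → ℝ) (ξ₁ : ℝ)
    (hy : Differentiable ℝ y) (hy' : Differentiable ℝ (deriv y))
    (hy'' : Differentiable ℝ (deriv (deriv y)))
    (hb : ∀ t ∈ Set.Icc (0:ℝ) 1, |deriv (deriv (deriv y)) t| ≤ ξ₁)
    (J : ℕ) :
    L2norm (truncErrBVP (haarCoeff (deriv (deriv y))) J) ≤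
      ξ₁ / 3 * (1 / 2 ^ (J + 1)) ^ 2 :=
  truncation_error_bound_bvp_general y ξ₁ hy' hy'' hb J
end

section
/- Let M ≥ 1, let a₁, …, a_{2M}, b₁, …, b_{2M} ∈ ℝ, and let n₁, n₂, v₁, v₂ ∈ (0,1) with n₁n₂v₁v₂ ≠ 1. Suppose y, z : ℝ → ℝ are twice differentiable with y''(t) = Σ_{i=1}^{2M} a_i h_i(t) and z''(t) = Σ_{i=1}^{2M} b_i h_i(t) for all t ∈ [0,1], and suppose the four-point boundary conditions y(0) = 0, y(1) = n₁ z(v₁), z(0) = 0, z(1) = n₂ y(v₂) hold. Then for all t ∈ [0,1]: y(t) = (n₁ t/(1 − n₁n₂v₁v₂))·[ n₂v₁ Σ_{i=1}^{2M} a_i (P_{2,i}(v₂) − v₂P_{2,i}(1)) + Σ_{i=1}^{2M} b_i (P_{2,i}(v₁) − v₁P_{2,i}(1)) ] + Σ_{i=1}^{2M} a_i (P_{2,i}(t) − t·P_{2,i}(1)), and z(t) = (n₂ t/(1 − n₁n₂v₁v₂))·[ Σ_{i=1}^{2M} a_i (P_{2,i}(v₂) − v₂P_{2,i}(1)) + v₂n₁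 Σ_{i=1}^{2M} b_i (P_{2,i}(v₁) − v₁P_{2,i}(1)) ] + Σ_{i=1}^{2M} b_i (P_{2,i}(t) − t·P_{2,i}(1)). -/
open MeasureTheory Real

/-- The Haar wavelet family indexed by `i ≥ 1`: `h 1` is the indicator of `[0,1]`,
and for `i = 2^j + k + 1 ≥ 2` (with `0 ≤ k < 2^j`) it is the wavelet `haarJK j k`. -/
noncomputable def haar (i : ℕ) (t : ℝ) : ℝ :=
  if i = 1 then (if 0 ≤ t ∧ t ≤ 1 then 1 else 0)
  else haarJK (Nat.log 2 (i - 1)) (i - 1 - 2 ^ Nat.log 2 (i - 1)) t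

/-- `P_{1,i}(x) = ∫₀ˣ h_i(t) dt`. -/
noncomputable def P1 (i : ℕ) (x : ℝ) : ℝ := ∫ t in (0:ℝ)..x, haar i t

/-- `P_{2,i}(x) = ∫₀ˣ (x - t) h_i(t) dt`. -/
noncomputable def P2 (i : ℕ) (x : ℝ) : ℝ := ∫ t in (0:ℝ)..x, (x - t) * haar i t

/-!
Integrating `f'' = ∑ cᵢ hᵢ` twice on `[0,1]` expresses a solution through its two end values,
`f t = (1 - t) f(0) + t f(1) + ∑ cᵢ (P_{2,i}(t) - t P_{2,i}(1))`. With `y(0) = z(0) = 0`, the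
four-point conditions then become a 2×2 linear system for `y(1)` and `z(1)` with determinant
`1 - n₁n₂v₁v₂`.
-/

lemma measurable_haarJK (j k : ℕ) : Measurable (haarJK j k) :=
  Measurable.ite measurableSet_Ico measurable_const
    (Measurable.ite measurableSet_Ico measurable_const measurable_const)

lemma measurable_haar (i : ℕ) : Measurable (haar i) := by
  unfold haar
  split_ifs
  · exact Measurable.ite measurableSet_Icc measurable_const measurable_const
  · exact measurable_haarJK _ _

lemma norm_haar_le_one (i : ℕ) (t : ℝ) : ‖haar i t‖ ≤ 1 := by
  unfold haar haarJK
  split_ifs <;> simp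

lemma intervalIntegrable_haar (i : ℕ) (c d : ℝ) : IntervalIntegrable (haar i) volume c d := by
  rw [intervalIntegrable_iff]
  exact Measure.integrableOn_of_bounded measure_Ioc_lt_top.ne
    (measurable_haar i).aestronglyMeasurable (Filter.Eventually.of_forall (norm_haar_le_one i))

lemma integral_sub_mul_sum_haar (s : Finset ℕ) (c : ℕ → ℝ) (t : ℝ) :
    ∫ x in (0:ℝ)..t, (t - x) * ∑ i ∈ s, c i * haar i x = ∑ i ∈ s, c i * P2 i t := by
  simp_rw [Finset.mul_sum, mul_left_comm (t - _)]
  rw [intervalIntegral.integral_finsetSum fun i _ =>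
    ((intervalIntegrable_haar _ 0 t).continuousOn_mul (by fun_prop)).const_mul (c i)]
  simp only [intervalIntegral.integral_const_mul, P2]

/-- `taylor_integral_remainder` needs `f` to be `C²`; here `f''` is only integrable. -/
lemma eq_add_deriv_mul_add_integral_deriv_deriv {f : ℝ → ℝ} {a b : ℝ}
    (hf : Differentiable ℝ f) (hf' : Differentiable ℝ (deriv f))
    (hf'' : IntervalIntegrable (deriv (deriv f)) volume a b) :
    f b = f a + deriv f a * (b - a) + ∫ x in a..b, (b - x) * deriv (deriv f) x := by
  have parts : ∫ x in a..b, (b - x) * deriv (deriv f) x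
      = (b - b) * deriv f b - (b - a) * deriv f a - ∫ x in a..b, (-1) * deriv f x :=
    intervalIntegral.integral_mul_deriv_eq_deriv_mul_of_hasDerivAt (by fun_prop)
      hf'.continuous.continuousOn (fun x _ => by simpa using (hasDerivAt_id x).const_sub b)
      (fun x _ => (hf' x).hasDerivAt) intervalIntegrable_const hf''
  have ftc : ∫ x in a..b, deriv f x = f b - f a :=
    intervalIntegral.integral_deriv_eq_sub (fun x _ => hf x)
      hf'.continuous.continuousOn.intervalIntegrable
  rw [parts, intervalIntegral.integral_const_mul, ftc]
  ring

lemma eq_add_deriv_mul_add_sum_P2 (s : Finset ℕ) (c : ℕ → ℝ)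
    {f : ℝ → ℝ} (hf : Differentiable ℝ f) (hf' : Differentiable ℝ (deriv f))
    (hf'' : ∀ x ∈ Set.Icc (0:ℝ) 1, deriv (deriv f) x = ∑ i ∈ s, c i * haar i x)
    {t : ℝ} (ht : t ∈ Set.Icc (0:ℝ) 1) :
    f t = f 0 + deriv f 0 * t + ∑ i ∈ s, c i * P2 i t := by
  have hsub : Set.uIcc 0 t ⊆ Set.Icc (0:ℝ) 1 := by
    rw [Set.uIcc_of_le ht.1]; exact Set.Icc_subset_Icc le_rfl ht.2
  have hint : IntervalIntegrable (fun x => ∑ i ∈ s, c i * haar i x) volume 0 t := by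
    simpa only [Finset.sum_fn] using IntervalIntegrable.sum s fun i _ =>
      (intervalIntegrable_haar i 0 t).const_mul (c i)
  have hcongr : ∫ x in (0:ℝ)..t, (t - x) * deriv (deriv f) x
      = ∫ x in (0:ℝ)..t, (t - x) * ∑ i ∈ s, c i * haar i x :=
    intervalIntegral.integral_congr fun x hx => by simp only [hf'' x (hsub hx)]
  rw [eq_add_deriv_mul_add_integral_deriv_deriv hf hf'
    (hint.congr fun x hx => (hf'' x (hsub (Set.uIoc_subset_uIcc hx))).symm),
    hcongr, integral_sub_mul_sum_haar, sub_zero]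

lemma eq_interpolation_add_sum_P2 (s : Finset ℕ) (c : ℕ → ℝ)
    {f : ℝ → ℝ} (hf : Differentiable ℝ f) (hf' : Differentiable ℝ (deriv f))
    (hf'' : ∀ x ∈ Set.Icc (0:ℝ) 1, deriv (deriv f) x = ∑ i ∈ s, c i * haar i x)
    {t : ℝ} (ht : t ∈ Set.Icc (0:ℝ) 1) :
    f t = (1 - t) * f 0 + t * f 1 + ∑ i ∈ s, c i * (P2 i t - t * P2 i 1) := by
  have hft := eq_add_deriv_mul_add_sum_P2 s c hf hf' hf'' ht
  have hf1 := eq_add_deriv_mul_add_sum_P2 s c hf hf' hf'' (Set.right_mem_Icc.2 zero_le_one)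
  simp only [mul_sub, Finset.sum_sub_distrib, mul_left_comm _ t, ← Finset.mul_sum]
  linear_combination hft - t * hf1

lemma four_point_end_values {y₁ z₁ n₁ n₂ v₁ v₂ α β : ℝ} (hne : n₁ * n₂ * v₁ * v₂ ≠ 1)
    (hy : y₁ = n₁ * (z₁ * v₁ + β)) (hz : z₁ = n₂ * (y₁ * v₂ + α)) :
    y₁ = n₁ / (1 - n₁ * n₂ * v₁ * v₂) * (n₂ * v₁ * α + β) ∧
      z₁ = n₂ / (1 - n₁ * n₂ * v₁ * v₂) * (α + v₂ * n₁ * β) := by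
  have hD : 1 - n₁ * n₂ * v₁ * v₂ ≠ 0 := sub_ne_zero.mpr (Ne.symm hne)
  constructor <;> rw [div_mul_eq_mul_div, eq_div_iff hD]
  · linear_combination hy + n₁ * v₁ * hz
  · linear_combination hz + n₂ * v₂ * hy

theorem haar_four_point_representation_general (M : ℕ) (a b : ℕ → ℝ)
    (n₁ n₂ v₁ v₂ : ℝ)
    (hv₁ : v₁ ∈ Set.Ioo (0:ℝ) 1) (hv₂ : v₂ ∈ Set.Ioo (0:ℝ) 1)
    (hne : n₁ * n₂ * v₁ * v₂ ≠ 1)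
    (y z : ℝ → ℝ)
    (hy : Differentiable ℝ y) (hy' : Differentiable ℝ (deriv y))
    (hz : Differentiable ℝ z) (hz' : Differentiable ℝ (deriv z))
    (hy'' : ∀ t ∈ Set.Icc (0:ℝ) 1,
      deriv (deriv y) t = ∑ i ∈ Finset.Icc 1 (2 * M), a i * haar i t)
    (hz'' : ∀ t ∈ Set.Icc (0:ℝ) 1,
      deriv (deriv z) t = ∑ i ∈ Finset.Icc 1 (2 * M), b i * haar i t)
    (hy0 : y 0 = 0) (hy1 : y 1 = n₁ * z v₁)
    (hz0 : z 0 = 0) (hz1 : z 1 = n₂ * y v₂) :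
    ∀ t ∈ Set.Icc (0:ℝ) 1,
      y t = n₁ * t / (1 - n₁ * n₂ * v₁ * v₂) *
          (n₂ * v₁ * ∑ i ∈ Finset.Icc 1 (2 * M), a i * (P2 i v₂ - v₂ * P2 i 1) +
            ∑ i ∈ Finset.Icc 1 (2 * M), b i * (P2 i v₁ - v₁ * P2 i 1)) +
          ∑ i ∈ Finset.Icc 1 (2 * M), a i * (P2 i t - t * P2 i 1) ∧
      z t = n₂ * t / (1 - n₁ * n₂ * v₁ * v₂) *
          (∑ i ∈ Finset.Icc 1 (2 * M), a i * (P2 i v₂ - v₂ * P2 i 1) +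
            v₂ * n₁ * ∑ i ∈ Finset.Icc 1 (2 * M), b i * (P2 i v₁ - v₁ * P2 i 1)) +
          ∑ i ∈ Finset.Icc 1 (2 * M), b i * (P2 i t - t * P2 i 1) := by
  have hY : ∀ s ∈ Set.Icc (0:ℝ) 1,
      y s = y 1 * s + ∑ i ∈ Finset.Icc 1 (2 * M), a i * (P2 i s - s * P2 i 1) := fun s hs => by
    rw [eq_interpolation_add_sum_P2 _ a hy hy' hy'' hs, hy0]; ring
  have hZ : ∀ s ∈ Set.Icc (0:ℝ) 1,
      z s = z 1 * s + ∑ i ∈ Finset.Icc 1 (2 * M), b i * (P2 i s - s * P2 i 1) := fun s hs => by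
    rw [eq_interpolation_add_sum_P2 _ b hz hz' hz'' hs, hz0]; ring
  obtain ⟨hy1', hz1'⟩ := four_point_end_values hne
    (hy1.trans (by rw [hZ v₁ (Set.Ioo_subset_Icc_self hv₁)]))
    (hz1.trans (by rw [hY v₂ (Set.Ioo_subset_Icc_self hv₂)]))
  intro t ht
  constructor
  · rw [hY t ht, hy1']; ring
  · rw [hZ t ht, hz1']; ring

/-- integrating the Haar expansions of `y''` and `z''` with the
four-point boundary conditions `y(0) = 0`, `y(1) = n₁z(v₁)`, `z(0) = 0`,
`z(1) = n₂y(v₂)`. -/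
theorem haar_four_point_representation (M : ℕ) (hM : 1 ≤ M) (a b : ℕ → ℝ)
    (n₁ n₂ v₁ v₂ : ℝ)
    (hn₁ : n₁ ∈ Set.Ioo (0:ℝ) 1) (hn₂ : n₂ ∈ Set.Ioo (0:ℝ) 1)
    (hv₁ : v₁ ∈ Set.Ioo (0:ℝ) 1) (hv₂ : v₂ ∈ Set.Ioo (0:ℝ) 1)
    (hne : n₁ * n₂ * v₁ * v₂ ≠ 1)
    (y z : ℝ → ℝ)
    (hy : Differentiable ℝ y) (hy' : Differentiable ℝ (deriv y))
    (hz : Differentiable ℝ z) (hz' : Differentiable ℝ (deriv z))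
    (hy'' : ∀ t ∈ Set.Icc (0:ℝ) 1,
      deriv (deriv y) t = ∑ i ∈ Finset.Icc 1 (2 * M), a i * haar i t)
    (hz'' : ∀ t ∈ Set.Icc (0:ℝ) 1,
      deriv (deriv z) t = ∑ i ∈ Finset.Icc 1 (2 * M), b i * haar i t)
    (hy0 : y 0 = 0) (hy1 : y 1 = n₁ * z v₁)
    (hz0 : z 0 = 0) (hz1 : z 1 = n₂ * y v₂) :
    ∀ t ∈ Set.Icc (0:ℝ) 1,
      y t = n₁ * t / (1 - n₁ * n₂ * v₁ * v₂) *
          (n₂ * v₁ * ∑ i ∈ Finset.Icc 1 (2 * M), a i * (P2 i v₂ - v₂ * P2 i 1) +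
            ∑ i ∈ Finset.Icc 1 (2 * M), b i * (P2 i v₁ - v₁ * P2 i 1)) +
          ∑ i ∈ Finset.Icc 1 (2 * M), a i * (P2 i t - t * P2 i 1) ∧
      z t = n₂ * t / (1 - n₁ * n₂ * v₁ * v₂) *
          (∑ i ∈ Finset.Icc 1 (2 * M), a i * (P2 i v₂ - v₂ * P2 i 1) +
            v₂ * n₁ * ∑ i ∈ Finset.Icc 1 (2 * M), b i * (P2 i v₁ - v₁ * P2 i 1)) +
          ∑ i ∈ Finset.Icc 1 (2 * M), b i * (P2 i t - t * P2 i 1) :=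
  haar_four_point_representation_general M a b n₁ n₂ v₁ v₂ hv₁ hv₂ hne y z hy hy' hz hz' hy'' hz''
    hy0 hy1 hz0 hz1
end

section
/- The functions y(t) = √(1 + t²) and z(t) = 1/√(1 + t²) solve the coupled Lane–Emden initial value problem: for all t > 0, −(t y'(t))' = t·(−z(t)³(y(t)² + 1)) and −(t³ z'(t))' = t³·z(t)⁵(y(t)² + 3), together with the initial conditions y(0) = 1, y'(0) = 0, z(0) = 1, z'(0) = 0. -/
/-!
Write `r = √(1 + t²)`, so `y = r`, `z = 1/r`, `r' = t/r` and `r² = 1 + t²`. Then `t y' = t²/r` and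
`t³ z' = -t⁴/r³`, and both sides of each equation reduce to the quotient rule for `tⁿ/rᵐ`,
followed by the substitution `1 + t² = r²`.
-/

open Real

lemma hasDerivAt_sqrt_one_add_sq (t : ℝ) :
    HasDerivAt (fun s : ℝ => √(1 + s ^ 2)) (t / √(1 + t ^ 2)) t := by
  have h : HasDerivAt (fun s : ℝ => 1 + s ^ 2) (2 * t) t := by
    simpa using (hasDerivAt_pow 2 t).const_add 1
  convert h.sqrt (by positivity) using 1
  field_simp

lemma hasDerivAt_sqrt_one_add_sq_pow (m : ℕ) (t : ℝ) :
    HasDerivAt (fun s : ℝ => √(1 + s ^ 2) ^ m) (m * t * √(1 + t ^ 2) ^ m / (1 + t ^ 2)) t := by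
  refine ((hasDerivAt_sqrt_one_add_sq t).fun_pow m).congr_deriv ?_
  rcases m with _ | m
  · simp
  · have hr : √(1 + t ^ 2) ^ 2 = 1 + t ^ 2 := sq_sqrt (by positivity)
    field_simp
    rw [Nat.add_sub_cancel]
    linear_combination (-t * √(1 + t ^ 2) ^ m) * hr

-- At `n = 0` the truncated exponent `n - 1` is harmless: its term carries the factor `n`.
lemma hasDerivAt_pow_div_sqrt_one_add_sq_pow (n m : ℕ) (t : ℝ) :
    HasDerivAt (fun s : ℝ => s ^ n / √(1 + s ^ 2) ^ m)
      ((n * t ^ (n - 1) * (1 + t ^ 2) - m * t ^ (n + 1)) / ((1 + t ^ 2) * √(1 + t ^ 2) ^ m)) t := by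
  refine ((hasDerivAt_pow n t).fun_div (hasDerivAt_sqrt_one_add_sq_pow m t)
    (by positivity)).congr_deriv ?_
  rcases n with _ | n <;> field_simp <;> ring

lemma deriv_sqrt_one_add_sq (t : ℝ) :
    deriv (fun s : ℝ => √(1 + s ^ 2)) t = t / √(1 + t ^ 2) :=
  (hasDerivAt_sqrt_one_add_sq t).deriv

lemma deriv_one_div_sqrt_one_add_sq (t : ℝ) :
    deriv (fun s : ℝ => 1 / √(1 + s ^ 2)) t = -t / ((1 + t ^ 2) * √(1 + t ^ 2)) := by
  have h := (hasDerivAt_pow_div_sqrt_one_add_sq_pow 0 1 t).deriv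
  simp only [pow_zero, pow_one, zero_add, Nat.cast_zero, Nat.cast_one] at h
  rw [h]
  ring

/-- Example 2: `y(t) = √(1+t²)`, `z(t) = 1/√(1+t²)` solve the
coupled Lane–Emden IVP `-(t·y')' = t·(-z³(y²+1))`, `-(t³z')' = t³·z⁵(y²+3)`
with `y(0) = 1`, `y'(0) = 0`, `z(0) = 1`, `z'(0) = 0`. -/
theorem lane_emden_ivp_example2 :
    ∀ y z : ℝ → ℝ,
      (y = fun t => Real.sqrt (1 + t ^ 2)) →
      (z = fun t => 1 / Real.sqrt (1 + t ^ 2)) →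
      (∀ t : ℝ, 0 < t →
        -deriv (fun s => s * deriv y s) t = t * (-(z t) ^ 3 * (y t ^ 2 + 1))) ∧
      (∀ t : ℝ, 0 < t →
        -deriv (fun s => s ^ 3 * deriv z s) t = t ^ 3 * (z t ^ 5 * (y t ^ 2 + 3))) ∧
      y 0 = 1 ∧ deriv y 0 = 0 ∧ z 0 = 1 ∧ deriv z 0 = 0 := by
  rintro y z rfl rfl
  have hr (t : ℝ) : √(1 + t ^ 2) ^ 2 = 1 + t ^ 2 := sq_sqrt (by positivity)
  have hty : (fun s => s * deriv (fun u => √(1 + u ^ 2)) s) = fun s => s ^ 2 / √(1 + s ^ 2) ^ 1 := by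
    ext s
    rw [deriv_sqrt_one_add_sq]
    ring
  have htz : (fun s => s ^ 3 * deriv (fun u => 1 / √(1 + u ^ 2)) s)
      = fun s => -(s ^ 4 / √(1 + s ^ 2) ^ 3) := by
    ext s
    rw [deriv_one_div_sqrt_one_add_sq]
    field_simp
    rw [hr]
  refine ⟨fun t _ => ?_, fun t _ => ?_, by simp, by simp, by simp,
    by rw [deriv_one_div_sqrt_one_add_sq]; simp⟩
  · rw [hty, (hasDerivAt_pow_div_sqrt_one_add_sq_pow 2 1 t).deriv]
    field_simp
    rw [hr]
    push_cast
    ring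
  · rw [htz, (hasDerivAt_pow_div_sqrt_one_add_sq_pow 4 3 t).fun_neg.deriv]
    field_simp
    rw [hr]
    push_cast
    ring
end
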